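/- arXiv:2407.04037 — 3 statements merged into one kernel-verified Lean document; each statement's English description precedes it below -/
import Mathlib

section
/- Let G be an undirected graph, let H be a 'global gadget' graph disjoint from G, and let A be a subset of the vertices of H. Define G* to be the graph obtained as the disjoint union of G and H together with all edges between vertices of A and vertices of G. Let k < ℓ be natural numbers. If (a) H contains no ℓ-clique, (b) A contains an (ℓ−k)-clique of H, and (c) A contains no (ℓ−k+1)-clique of H, then G contains a k-clique if and only if G* contains an ℓ-clique. -/
open SimpleGraph

/-- The global gadget construction: disjoint union of `G` and the gadget graph `H`,
together with all edges between the distinguished set `A ⊆ V(H)` and the vertices of `G`. -/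
def globalGadget {V W : Type*} (G : SimpleGraph V) (H : SimpleGraph W) (A : Set W) :
    SimpleGraph (V ⊕ W) where
  Adj x y :=
    (∃ u v, x = Sum.inl u ∧ y = Sum.inl v ∧ G.Adj u v) ∨
    (∃ a b, x = Sum.inr a ∧ y = Sum.inr b ∧ H.Adj a b) ∨
    (∃ u a, a ∈ A ∧ ((x = Sum.inl u ∧ y = Sum.inr a) ∨ (x = Sum.inr a ∧ y = Sum.inl u)))
  symm := by
    constructor
    rintro x y (⟨u, v, rfl, rfl, h⟩ | ⟨a, b, rfl, rfl, h⟩ | ⟨u, a, ha, ⟨rfl, rfl⟩ | ⟨rfl, rfl⟩⟩)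
    · exact Or.inl ⟨v, u, rfl, rfl, h.symm⟩
    · exact Or.inr (Or.inl ⟨b, a, rfl, rfl, h.symm⟩)
    · exact Or.inr (Or.inr ⟨u, a, ha, Or.inr ⟨rfl, rfl⟩⟩)
    · exact Or.inr (Or.inr ⟨u, a, ha, Or.inl ⟨rfl, rfl⟩⟩)
  loopless := by
    constructor
    rintro x (⟨u, v, rfl, h, h'⟩ | ⟨a, b, rfl, h, h'⟩ | ⟨u, a, ha, ⟨rfl, h⟩ | ⟨rfl, h⟩⟩)
    · cases h; exact h'.ne rfl
    · cases h; exact h'.ne rfl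
    · exact Sum.inl_ne_inr h
    · exact Sum.inr_ne_inl h

/-!
A `k`-clique of `G` together with an `(ℓ - k)`-clique inside `A` is an `ℓ`-clique of `G*`.
Conversely, an `ℓ`-clique of `G*` meets `G`, since `H` has no `ℓ`-clique; its part in `H` is
then a clique inside `A`, so it has at most `ℓ - k` vertices, and at least `k` of its vertices
lie in `G`.
-/

namespace SimpleGraph

variable {α : Type*} {G : SimpleGraph α} {s : Set α} {t : Finset α} {n : ℕ}

theorem IsClique.card_lt_of_cliqueFreeOn (ht : G.IsClique t) (hts : ↑t ⊆ s)
    (hG : G.CliqueFreeOn s n) : t.card < n := by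
  by_contra! h
  exact CliqueFreeOn.mono G h hG hts ⟨ht, rfl⟩

theorem IsClique.card_lt_of_cliqueFree (ht : G.IsClique t) (hG : G.CliqueFree n) : t.card < n :=
  ht.card_lt_of_cliqueFreeOn (Set.subset_univ _) hG.cliqueFreeOn

end SimpleGraph

namespace globalGadget

variable {V W : Type*} {G : SimpleGraph V} {H : SimpleGraph W} {A : Set W}

@[simp]
theorem adj_inl_inl {u v : V} : (globalGadget G H A).Adj (.inl u) (.inl v) ↔ G.Adj u v := by
  simp [globalGadget]

@[simp]
theorem adj_inr_inr {a b : W} : (globalGadget G H A).Adj (.inr a) (.inr b) ↔ H.Adj a b := by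
  simp [globalGadget]

@[simp]
theorem adj_inl_inr {u : V} {a : W} : (globalGadget G H A).Adj (.inl u) (.inr a) ↔ a ∈ A := by
  simp [globalGadget]

@[simp]
theorem adj_inr_inl {a : W} {u : V} : (globalGadget G H A).Adj (.inr a) (.inl u) ↔ a ∈ A := by
  simp [globalGadget]

theorem isNClique_disjSum {k m : ℕ} {s : Finset V} {t : Finset W} (hs : G.IsNClique k s)
    (ht : H.IsNClique m t) (htA : ↑t ⊆ A) :
    (globalGadget G H A).IsNClique (k + m) (s.disjSum t) := by
  refine ⟨?_, by rw [Finset.card_disjSum, hs.card_eq, ht.card_eq]⟩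
  rintro (u | a) hx (v | b) hy hxy <;>
    simp only [Finset.mem_coe, Finset.inl_mem_disjSum, Finset.inr_mem_disjSum] at hx hy
  · exact adj_inl_inl.2 (hs.isClique hx hy (ne_of_apply_ne _ hxy))
  · exact adj_inl_inr.2 (htA hy)
  · exact adj_inr_inl.2 (htA hx)
  · exact adj_inr_inr.2 (ht.isClique hx hy (ne_of_apply_ne _ hxy))

variable {t : Finset (V ⊕ W)}

theorem isClique_toLeft (h : (globalGadget G H A).IsClique t) : G.IsClique t.toLeft :=
  fun _ hu _ hv huv ↦ adj_inl_inl.1 <|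
    h (Finset.mem_toLeft.1 hu) (Finset.mem_toLeft.1 hv) (Sum.inl_injective.ne huv)

theorem isClique_toRight (h : (globalGadget G H A).IsClique t) : H.IsClique t.toRight :=
  fun _ ha _ hb hab ↦ adj_inr_inr.1 <|
    h (Finset.mem_toRight.1 ha) (Finset.mem_toRight.1 hb) (Sum.inr_injective.ne hab)

theorem toRight_subset_of_isClique (h : (globalGadget G H A).IsClique t) (hne : t.toLeft.Nonempty) :
    ↑t.toRight ⊆ A := by
  obtain ⟨u, hu⟩ := hne
  intro a ha
  exact adj_inl_inr.1 <| h (Finset.mem_toLeft.1 hu) (Finset.mem_toRight.1 ha) Sum.inl_ne_inr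

theorem exists_isNClique_of_isNClique {k ℓ : ℕ} (hkl : k ≤ ℓ) (hH : H.CliqueFree ℓ)
    (hA : H.CliqueFreeOn A (ℓ - k + 1)) (ht : (globalGadget G H A).IsNClique ℓ t) :
    ∃ s : Finset V, G.IsNClique k s := by
  have hclique := ht.isClique
  have hcard : t.toLeft.card + t.toRight.card = ℓ := by
    rw [Finset.card_toLeft_add_card_toRight, ht.card_eq]
  have hne : t.toLeft.Nonempty := by
    have := (isClique_toRight hclique).card_lt_of_cliqueFree hH
    rw [← Finset.card_pos]
    omega
  have hright : t.toRight.card < ℓ - k + 1 :=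
    (isClique_toRight hclique).card_lt_of_cliqueFreeOn (toRight_subset_of_isClique hclique hne) hA
  obtain ⟨s, hs, hs_card⟩ := Finset.exists_subset_card_eq (s := t.toLeft) (n := k) (by omega)
  exact ⟨s, (isClique_toLeft hclique).subset hs, hs_card⟩

end globalGadget

theorem stmt_0 {V W : Type*} (G : SimpleGraph V) (H : SimpleGraph W) (A : Set W)
    (k ℓ : ℕ) (hkl : k < ℓ)
    (ha : ∀ t : Finset W, ¬ H.IsNClique ℓ t)
    (hb : ∃ t : Finset W, ↑t ⊆ A ∧ H.IsNClique (ℓ - k) t)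
    (hc : ∀ t : Finset W, ↑t ⊆ A → ¬ H.IsNClique (ℓ - k + 1) t) :
    (∃ s : Finset V, G.IsNClique k s) ↔
      ∃ t : Finset (V ⊕ W), (globalGadget G H A).IsNClique ℓ t := by
  constructor
  · rintro ⟨s, hs⟩
    obtain ⟨t, htA, ht⟩ := hb
    exact ⟨s.disjSum t, Nat.add_sub_cancel' hkl.le ▸ globalGadget.isNClique_disjSum hs ht htA⟩
  · rintro ⟨t, ht⟩
    exact globalGadget.exists_isNClique_of_isNClique hkl.le ha hc ht
end

section
/- Let H be a graph with two distinguished distinct vertices c and d, and suppose {c} and {d} are each feedback vertex sets of H (removing c, respectively d, makes H acyclic), while the empty set is not a feedback vertex set of H (H contains a cycle). For a graph G, let G* be obtained by replacing each edge (u,v) of G with a fresh copy of H, identifying u with c and v with d. Then for every k, G has a vertex cover of size at most k if and only if G* has a feedback vertex set of size at most k. -/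
open SimpleGraph

/-- A vertex cover: a set of vertices meeting every edge. -/
def IsVertexCover {V : Type*} (G : SimpleGraph V) (U : Set V) : Prop :=
  ∀ ⦃u v⦄, G.Adj u v → u ∈ U ∨ v ∈ U

/-- A feedback vertex set: a set of vertices whose removal leaves an acyclic graph. -/
def IsFVS {V : Type*} (G : SimpleGraph V) (U : Set V) : Prop :=
  (G.induce Uᶜ).IsAcyclic

/-- The vertex type of the edge-gadget image of `G`: the original vertices plus, for each
(oriented) edge of `G`, a fresh copy of the interior of the gadget graph `H`. -/
def EGVert {V W : Type*} [LinearOrder V] (G : SimpleGraph V) (c d : W) : Type _ :=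
  V ⊕ ({p : V × V // G.Adj p.1 p.2 ∧ p.1 < p.2} × {w : W // w ≠ c ∧ w ≠ d})

/-- Base adjacency relation for the edge-gadget construction: each edge `(u,v)` of `G`
(with `u < v`) is replaced by a fresh copy of `H`, identifying `u` with `c` and `v` with `d`. -/
def egBase {V W : Type*} [LinearOrder V] (G : SimpleGraph V) (H : SimpleGraph W) (c d : W)
    (x y : EGVert G c d) : Prop :=
  (∃ e : {p : V × V // G.Adj p.1 p.2 ∧ p.1 < p.2},
      x = Sum.inl e.1.1 ∧ y = Sum.inl e.1.2 ∧ H.Adj c d) ∨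
  (∃ (e : {p : V × V // G.Adj p.1 p.2 ∧ p.1 < p.2}) (w : {w : W // w ≠ c ∧ w ≠ d}),
      x = Sum.inl e.1.1 ∧ y = Sum.inr (e, w) ∧ H.Adj c w.1) ∨
  (∃ (e : {p : V × V // G.Adj p.1 p.2 ∧ p.1 < p.2}) (w : {w : W // w ≠ c ∧ w ≠ d}),
      x = Sum.inl e.1.2 ∧ y = Sum.inr (e, w) ∧ H.Adj d w.1) ∨
  (∃ (e : {p : V × V // G.Adj p.1 p.2 ∧ p.1 < p.2}) (w w' : {w : W // w ≠ c ∧ w ≠ d}),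
      x = Sum.inr (e, w) ∧ y = Sum.inr (e, w') ∧ H.Adj w.1 w'.1)

/-- The edge-gadget image of `G`: every edge of `G` is replaced by a disjoint copy of `H`,
identifying the endpoints with the distinguished vertices `c` and `d` of `H`. -/
def edgeGadget {V W : Type*} [LinearOrder V] (G : SimpleGraph V) (H : SimpleGraph W)
    (c d : W) : SimpleGraph (EGVert G c d) where
  Adj x y := egBase G H c d x y ∨ egBase G H c d y x
  symm := ⟨fun x y h => Or.symm h⟩
  loopless := by
    refine ⟨fun x h => ?_⟩
    have : egBase G H c d x x := by rcases h with h | h <;> exact h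
    rcases this with ⟨e, h1, h2, _⟩ | ⟨e, w, h1, h2, _⟩ | ⟨e, w, h1, h2, _⟩
      | ⟨e, w, w', h1, h2, hadj⟩
    · rw [h1] at h2
      exact absurd (Sum.inl_injective h2) (ne_of_lt e.2.2)
    · rw [h1] at h2; exact Sum.inl_ne_inr h2
    · rw [h1] at h2; exact Sum.inl_ne_inr h2
    · rw [h1] at h2
      obtain ⟨-, h⟩ := Prod.mk.injEq _ _ _ _ ▸ Sum.inr_injective h2
      exact H.loopless.irrefl _ (by rwa [h] at hadj)

/-!
A vertex cover `U` of `G` gives the feedback vertex set `inl '' U` of the edge-gadget graph: a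
cycle avoiding it passes through an interior vertex of the copy of `H` on some edge `uv`, cannot
leave that copy because one of its two attachment vertices `u`, `v` is deleted, and is therefore
a cycle of `H`, which has to pass through both `c` and `d`, that is through `u` and `v`.
Conversely every copy of `H` contains a cycle, so a feedback vertex set meets every copy, and
sending each of its vertices to an endpoint of the corresponding edge gives a vertex cover that
is no larger.
-/

namespace SimpleGraph.Walk

variable {V V' : Type*} {G : SimpleGraph V} {G' : SimpleGraph V'}

lemma IsCycle.induce {s : Set V} {u : V} {p : G.Walk u u} (hp : p.IsCycle)
    (hs : ∀ x ∈ p.support, x ∈ s) : (p.induce s hs).IsCycle := by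
  rwa [← isCycle_map_iff_of_injective (f := (Embedding.induce (G := G) s).toHom)
    (Embedding.induce (G := G) s).injective, map_induce]

lemma IsCycle.exists_isCycle_of_support_subset_range (f : G ↪g G') {u : V'} {p : G'.Walk u u}
    (hp : p.IsCycle) (hs : ∀ x ∈ p.support, x ∈ Set.range f) :
    ∃ (v : V) (q : G.Walk v v), q.IsCycle ∧ ∀ x ∈ q.support, f x ∈ p.support := by
  refine ⟨_, _, (hp.induce hs).map (f := f.isoInduceRange.symm.toHom)
    f.isoInduceRange.symm.injective, fun x hx => ?_⟩
  simp only [support_map, support_induce, List.mem_map, List.mem_attachWith] at hx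
  obtain ⟨y, hy, rfl⟩ := hx
  exact (Equiv.apply_ofInjective_symm f.injective y).symm ▸ hy

/-- A cycle through `u ∈ S` would have to pass twice through `a` to leave `S`. -/
lemma IsCycle.support_subset_of_forall_exit_eq_of_start {S : Set V} {u a : V}
    {p : G.Walk u u}
    (hp : p.IsCycle) (hu : u ∈ S) (hua : u ≠ a)
    (hexit : ∀ x ∈ p.support, ∀ y, G.Adj x y → x ∈ S → y ∉ S → x = a) :
    ∀ z ∈ p.support, z ∈ S := by
  classical
  intro z hz
  by_contra hzS
  obtain ⟨d₁, hd₁, hd₁S, hd₁S'⟩ := (p.takeUntil z hz).exists_boundary_dart S hu hzS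
  obtain ⟨d₂, hd₂, hd₂S, hd₂S'⟩ := (p.dropUntil z hz).reverse.exists_boundary_dart S hu hzS
  have ha₁ : a ∈ (p.takeUntil z hz).support := by
    have h := (p.takeUntil z hz).dart_fst_mem_support_of_mem_darts hd₁
    rwa [hexit _ (p.support_takeUntil_subset_support hz h) _ d₁.adj hd₁S hd₁S'] at h
  have ha₂ : a ∈ (p.dropUntil z hz).support.tail := by
    have h := (p.dropUntil z hz).reverse.dart_fst_mem_support_of_mem_darts hd₂
    rw [support_reverse, List.mem_reverse] at h
    have hd₂a := hexit _ (p.support_dropUntil_subset_support hz h) _ d₂.adj hd₂S hd₂S'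
    rw [← cons_tail_support, List.mem_cons] at h
    exact hd₂a ▸ h.resolve_left fun h' => hzS (h' ▸ hd₂S)
  have hcount := hp.count_support_of_mem (p.support_takeUntil_subset_support hz ha₁) hua.symm
  rw [← p.take_spec hz, support_append, List.count_append] at hcount
  have := List.count_pos_iff.2 ha₁
  have := List.count_pos_iff.2 ha₂
  omega

lemma IsCycle.support_subset_of_forall_exit_eq {S : Set V} {u x a : V} {p : G.Walk u u}
    (hp : p.IsCycle) (hx : x ∈ p.support) (hxS : x ∈ S) (hxa : x ≠ a)
    (hexit : ∀ x ∈ p.support, ∀ y, G.Adj x y → x ∈ S → y ∉ S → x = a) :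
    ∀ z ∈ p.support, z ∈ S := by
  classical
  have hrot := (hp.rotate hx).support_subset_of_forall_exit_eq_of_start hxS hxa
    fun y hy => hexit y ((p.mem_support_rotate_iff _ hx).1 hy)
  exact fun z hz => hrot z ((p.mem_support_rotate_iff _ hx).2 hz)

end SimpleGraph.Walk

lemma isFVS_iff_forall_isCycle {V : Type*} {G : SimpleGraph V} {U : Set V} :
    IsFVS G U ↔ ∀ (u : V) (p : G.Walk u u), p.IsCycle → ∃ x ∈ p.support, x ∈ U := by
  refine ⟨fun h u p hp => ?_, fun h u p hp => ?_⟩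
  · by_contra! hU
    exact h _ (hp.induce hU)
  · obtain ⟨x, hx, hxU⟩ := h _ _ (hp.map (f := (Embedding.induce (G := G) Uᶜ).toHom)
      (Embedding.induce (G := G) Uᶜ).injective)
    rw [Walk.support_map, List.mem_map] at hx
    obtain ⟨y, -, rfl⟩ := hx
    exact y.2 hxU

section EdgeGadget

variable {V W : Type*} [LinearOrder V] {G : SimpleGraph V} {H : SimpleGraph W} {c d : W}

variable (G) in
abbrev EGEdge : Type _ := {p : V × V // G.Adj p.1 p.2 ∧ p.1 < p.2}

variable (c d) in
abbrev EGInterior : Type _ := {w : W // w ≠ c ∧ w ≠ d}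

@[simp]
lemma edgeGadget_adj_inl_inl {x y : V} :
    (edgeGadget G H c d).Adj (.inl x : EGVert G c d) (.inl y) ↔ G.Adj x y ∧ H.Adj c d := by
  simp only [edgeGadget, egBase, EGVert, Subtype.exists, exists_and_left, exists_prop, Prod.exists,
    exists_and_right, Sum.inl.injEq, exists_eq_left', reduceCtorEq, exists_false, false_and,
    and_false, or_false]
  constructor
  · rintro (⟨⟨h, -⟩, hA⟩ | ⟨⟨h, -⟩, hA⟩)
    exacts [⟨h, hA⟩, ⟨h.symm, hA⟩]
  · rintro ⟨h, hA⟩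
    rcases h.ne.lt_or_gt with hlt | hlt
    exacts [.inl ⟨⟨h, hlt⟩, hA⟩, .inr ⟨⟨h.symm, hlt⟩, hA⟩]

@[simp]
lemma edgeGadget_adj_inl_inr {x : V} {e : EGEdge G} {w : EGInterior c d} :
    (edgeGadget G H c d).Adj (.inl x : EGVert G c d) (.inr (e, w)) ↔
      x = e.1.1 ∧ H.Adj c w ∨ x = e.1.2 ∧ H.Adj d w := by
  simp [edgeGadget, egBase, EGVert, -Subtype.exists]

@[simp]
lemma edgeGadget_adj_inr_inl {x : V} {e : EGEdge G} {w : EGInterior c d} :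
    (edgeGadget G H c d).Adj (.inr (e, w) : EGVert G c d) (.inl x) ↔
      x = e.1.1 ∧ H.Adj c w ∨ x = e.1.2 ∧ H.Adj d w :=
  ((edgeGadget G H c d).adj_comm _ _).trans edgeGadget_adj_inl_inr

@[simp]
lemma edgeGadget_adj_inr_inr {e e' : EGEdge G} {w w' : EGInterior c d} :
    (edgeGadget G H c d).Adj (.inr (e, w) : EGVert G c d) (.inr (e', w')) ↔
      e = e' ∧ H.Adj w w' := by
  simp only [edgeGadget, egBase, EGVert, exists_and_left, reduceCtorEq, false_and, and_self,
    exists_false, Sum.inr.injEq, Prod.mk.injEq, existsAndEq, and_true, exists_eq_left', false_or]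
  rw [H.adj_comm w'.1, eq_comm (a := e'), or_self]

variable (c d) in
open Classical in
noncomputable def gadgetVert (e : EGEdge G) (w : W) : EGVert G c d :=
  if hc : w = c then .inl e.1.1 else if hd : w = d then .inl e.1.2 else .inr (e, ⟨w, hc, hd⟩)

variable {e : EGEdge G}

@[simp]
lemma gadgetVert_left : gadgetVert c d e c = .inl e.1.1 :=
  dif_pos rfl

@[simp]
lemma gadgetVert_right (hdc : d ≠ c) : gadgetVert c d e d = .inl e.1.2 :=
  (dif_neg hdc).trans (dif_pos rfl)

@[simp]
lemma gadgetVert_interior (w : EGInterior c d) : gadgetVert c d e w = .inr (e, w) :=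
  (dif_neg w.2.1).trans (dif_neg w.2.2)

variable (c d) in
lemma eq_or_eq_or_exists_interior (w : W) :
    w = c ∨ w = d ∧ d ≠ c ∨ ∃ w' : EGInterior c d, w = w' := by
  by_cases hc : w = c
  · exact .inl hc
  by_cases hd : w = d
  · exact .inr (.inl ⟨hd, hd ▸ hc⟩)
  · exact .inr (.inr ⟨⟨w, hc, hd⟩, rfl⟩)

variable (H c d e) in
noncomputable def gadgetCopy : H ↪g edgeGadget G H c d where
  toFun := gadgetVert c d e
  inj' a b h := by
    have := e.2.2.ne
    have hb := eq_or_eq_or_exists_interior c d b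
    rcases eq_or_eq_or_exists_interior c d a with rfl | ⟨rfl, hdc⟩ | ⟨a, rfl⟩ <;>
    rcases hb with rfl | ⟨rfl, hdc⟩ | ⟨b, rfl⟩ <;>
    simp_all [EGVert]
  map_rel_iff' {a b} := by
    change (edgeGadget G H c d).Adj (gadgetVert c d e a) (gadgetVert c d e b) ↔ H.Adj a b
    have := e.2.1
    have := e.2.2.ne
    have hb := eq_or_eq_or_exists_interior c d b
    rcases eq_or_eq_or_exists_interior c d a with rfl | ⟨rfl, hdc⟩ | ⟨a, rfl⟩ <;>
    rcases hb with rfl | ⟨rfl, hdc⟩ | ⟨b, rfl⟩ <;>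
    simp_all [H.adj_comm, G.adj_comm, eq_comm]

@[simp]
lemma coe_gadgetCopy : ⇑(gadgetCopy H c d e) = gadgetVert c d e := rfl

lemma edgeGadget_adj_inr_mem_range (hdc : d ≠ c) {w : EGInterior c d}
    {y : EGVert G c d} (h : (edgeGadget G H c d).Adj (.inr (e, w)) y) :
    y ∈ Set.range (gadgetCopy H c d e) := by
  rcases y with x | ⟨e', w'⟩
  · rcases edgeGadget_adj_inr_inl.1 h with ⟨rfl, -⟩ | ⟨rfl, -⟩
    exacts [⟨c, gadgetVert_left⟩, ⟨d, gadgetVert_right hdc⟩]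
  · obtain ⟨rfl, -⟩ := edgeGadget_adj_inr_inr.1 h
    exact ⟨w', gadgetVert_interior w'⟩

lemma eq_inl_of_adj_of_notMem_range (hdc : d ≠ c) {x y : EGVert G c d}
    (hx : x ∈ Set.range (gadgetCopy H c d e)) (hxy : (edgeGadget G H c d).Adj x y)
    (hy : y ∉ Set.range (gadgetCopy H c d e)) : x = .inl e.1.1 ∨ x = .inl e.1.2 := by
  obtain ⟨w, rfl⟩ := hx
  rcases eq_or_eq_or_exists_interior c d w with rfl | ⟨rfl, -⟩ | ⟨w, rfl⟩
  · exact .inl gadgetVert_left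
  · exact .inr (gadgetVert_right hdc)
  · rw [coe_gadgetCopy, gadgetVert_interior] at hxy
    exact absurd (edgeGadget_adj_inr_mem_range hdc hxy) hy

def EGVert.anchor : EGVert G c d → V :=
  Sum.elim id fun q => q.1.1.1

lemma anchor_gadgetVert (w : W) :
    (gadgetVert c d e w).anchor = e.1.1 ∨ (gadgetVert c d e w).anchor = e.1.2 := by
  rcases eq_or_eq_or_exists_interior c d w with rfl | ⟨rfl, hdc⟩ | ⟨w, rfl⟩
  · rw [gadgetVert_left]; exact .inl rfl
  · rw [gadgetVert_right hdc]; exact .inr rfl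
  · rw [gadgetVert_interior]; exact .inl rfl

lemma exists_inr_of_adj {U : Set V} (hU : _root_.IsVertexCover G U) {x y : EGVert G c d}
    (h : (edgeGadget G H c d).Adj x y) (hx : x ∉ Sum.inl '' U) (hy : y ∉ Sum.inl '' U) :
    ∃ e w, x = .inr (e, w) ∨ y = .inr (e, w) := by
  rcases x with x | ⟨e, w⟩
  · rcases y with y | ⟨e, w⟩
    · rcases hU (edgeGadget_adj_inl_inl.1 h).1 with hxU | hyU
      exacts [absurd ⟨x, hxU, rfl⟩ hx, absurd ⟨y, hyU, rfl⟩ hy]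
    · exact ⟨e, w, .inr rfl⟩
  · exact ⟨e, w, .inl rfl⟩

lemma support_subset_range_gadgetCopy (hdc : d ≠ c) {u : EGVert G c d}
    {p : (edgeGadget G H c d).Walk u u} (hp : p.IsCycle) {w : EGInterior c d}
    (hw : .inr (e, w) ∈ p.support)
    (hends : (.inl e.1.1 : EGVert G c d) ∉ p.support ∨ (.inl e.1.2 : EGVert G c d) ∉ p.support) :
    ∀ x ∈ p.support, x ∈ Set.range (gadgetCopy H c d e) := by
  have hw' : (.inr (e, w) : EGVert G c d) ∈ Set.range (gadgetCopy H c d e) :=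
    ⟨w, gadgetVert_interior w⟩
  rcases hends with h | h
  · refine hp.support_subset_of_forall_exit_eq (a := .inl e.1.2) hw hw' Sum.inr_ne_inl
      fun x hx y hxy hxS hyS => ?_
    exact (eq_inl_of_adj_of_notMem_range hdc hxS hxy hyS).resolve_left
      (by rintro rfl; exact h hx)
  · refine hp.support_subset_of_forall_exit_eq (a := .inl e.1.1) hw hw' Sum.inr_ne_inl
      fun x hx y hxy hxS hyS => ?_
    exact (eq_inl_of_adj_of_notMem_range hdc hxS hxy hyS).resolve_right
      (by rintro rfl; exact h hx)

lemma inl_mem_support_of_support_subset_range (hdc : d ≠ c)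
    (hc : IsFVS H {c}) (hd : IsFVS H {d}) {u : EGVert G c d}
    {p : (edgeGadget G H c d).Walk u u} (hp : p.IsCycle)
    (hrange : ∀ x ∈ p.support, x ∈ Set.range (gadgetCopy H c d e)) :
    (.inl e.1.1 : EGVert G c d) ∈ p.support ∧ (.inl e.1.2 : EGVert G c d) ∈ p.support := by
  obtain ⟨v, q, hq, hqp⟩ := hp.exists_isCycle_of_support_subset_range _ hrange
  obtain ⟨c', hc', rfl⟩ := isFVS_iff_forall_isCycle.1 hc _ q hq
  obtain ⟨d', hd', rfl⟩ := isFVS_iff_forall_isCycle.1 hd _ q hq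
  have h₁ := hqp _ hc'
  have h₂ := hqp _ hd'
  rw [coe_gadgetCopy, gadgetVert_left] at h₁
  rw [coe_gadgetCopy, gadgetVert_right hdc] at h₂
  exact ⟨h₁, h₂⟩

theorem isVertexCover_image_anchor (hH : ¬ IsFVS H ∅) {U : Set (EGVert G c d)}
    (hU : IsFVS (edgeGadget G H c d) U) : _root_.IsVertexCover G (EGVert.anchor '' U) := by
  obtain ⟨w, p, hp⟩ : ∃ (w : W) (p : H.Walk w w), p.IsCycle := by
    simpa [isFVS_iff_forall_isCycle] using hH
  suffices h : ∀ e : EGEdge G, e.1.1 ∈ EGVert.anchor '' U ∨ e.1.2 ∈ EGVert.anchor '' U by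
    intro x y hxy
    rcases hxy.ne.lt_or_gt with hlt | hlt
    exacts [h ⟨(x, y), hxy, hlt⟩, (h ⟨(y, x), hxy.symm, hlt⟩).symm]
  intro e
  obtain ⟨z, hz, hzU⟩ := isFVS_iff_forall_isCycle.1 hU _ _
    (hp.map (f := (gadgetCopy H c d e).toHom) (gadgetCopy H c d e).injective)
  rw [Walk.support_map, List.mem_map] at hz
  obtain ⟨w, -, rfl⟩ := hz
  exact (anchor_gadgetVert w).imp (fun h => ⟨_, hzU, h⟩) (fun h => ⟨_, hzU, h⟩)

theorem isFVS_image_inl (hcd : c ≠ d) (hc : IsFVS H {c}) (hd : IsFVS H {d}) {U : Set V}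
    (hU : _root_.IsVertexCover G U) : IsFVS (edgeGadget G H c d) (Sum.inl '' U) := by
  rw [isFVS_iff_forall_isCycle]
  intro u p hp
  by_contra! hav
  obtain ⟨e, w, hw⟩ : ∃ e w, (.inr (e, w) : EGVert G c d) ∈ p.support := by
    obtain ⟨e, w, h | h⟩ := exists_inr_of_adj hU (p.adj_snd hp.not_nil)
      (hav _ p.start_mem_support) (hav _ (p.getVert_mem_support 1))
    exacts [⟨e, w, h ▸ p.start_mem_support⟩, ⟨e, w, h ▸ p.getVert_mem_support 1⟩]
  have hends :
      (.inl e.1.1 : EGVert G c d) ∉ p.support ∨ (.inl e.1.2 : EGVert G c d) ∉ p.support :=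
    (hU e.2.1).imp (fun h h' => hav _ h' ⟨_, h, rfl⟩) (fun h h' => hav _ h' ⟨_, h, rfl⟩)
  have hrange := support_subset_range_gadgetCopy hcd.symm hp hw hends
  have hboth := inl_mem_support_of_support_subset_range hcd.symm hc hd hp hrange
  exact hends.elim (· hboth.1) (· hboth.2)

end EdgeGadget

theorem stmt_2 {V W : Type*} [LinearOrder V] (G : SimpleGraph V) (H : SimpleGraph W)
    (c d : W) (hcd : c ≠ d)
    (hc : IsFVS H {c}) (hd : IsFVS H {d}) (hH : ¬ IsFVS H (∅ : Set W)) (k : ℕ) :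
    (∃ U : Finset V, U.card ≤ k ∧ _root_.IsVertexCover G ↑U) ↔
      (∃ U : Finset (EGVert G c d), U.card ≤ k ∧ IsFVS (edgeGadget G H c d) ↑U) := by
  classical
  constructor
  · rintro ⟨U, hk, hU⟩
    refine ⟨U.image (Sum.inl : V → EGVert G c d), Finset.card_image_le.trans hk, ?_⟩
    convert isFVS_image_inl hcd hc hd hU
    exact Finset.coe_image
  · rintro ⟨U, hk, hU⟩
    refine ⟨U.image EGVert.anchor, Finset.card_image_le.trans hk, ?_⟩
    rw [Finset.coe_image]
    exact isVertexCover_image_anchor hH hU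
end

section
/- The undirected graph G* on 9 vertices {1_u, 2_u, 3_u, 1_v, 2_v, 3_v, 1_w, 2_w, 3_w} in which each vertex 3_x (for x ∈ {u,v,w}) is adjacent exactly to {2_u, 2_v, 2_w}, each vertex 2_x is adjacent to all other 8 vertices, and each vertex 1_x is adjacent exactly to {2_u, 2_v, 2_w} ∪ ({1_u,1_v,1_w} \ {1_x}), has no Hamiltonian cycle. -/
open SimpleGraph

/-- A directed Hamiltonian cycle of the directed graph `R`: a cyclic enumeration of all
vertices following the edge directions. -/
def DirHamiltonian {V : Type*} [Fintype V] (R : V → V → Prop) : Prop :=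
  ∃ f : ZMod (Fintype.card V) ≃ V, ∀ i, R (f i) (f (i + 1))

/-- `f` enumerates an undirected Hamiltonian cycle of `G`. -/
def IsHamCycleFn {V : Type*} [Fintype V] (G : SimpleGraph V)
    (f : ZMod (Fintype.card V) ≃ V) : Prop :=
  ∀ i, G.Adj (f i) (f (i + 1))

/-- The undirected graph `G` has a Hamiltonian cycle. -/
def Hamiltonian {V : Type*} [Fintype V] (G : SimpleGraph V) : Prop :=
  ∃ f : ZMod (Fintype.card V) ≃ V, IsHamCycleFn G f

/-- Base (oriented) adjacency of the result of applying the node gadget with node graph `N`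
and cross-edges `C` to the directed graph `R`. -/
def nodeApplyBase {V : Type*} {m : ℕ} (N : SimpleGraph (Fin m)) (C : Fin m → Fin m → Prop)
    (R : V → V → Prop) (x y : V × Fin m) : Prop :=
  (x.1 = y.1 ∧ N.Adj x.2 y.2) ∨ (R x.1 y.1 ∧ C x.2 y.2)

/-- Applying a node-gadget reduction (node graph `N`, cross-edges `C`) to a directed graph
`R`: each vertex is replaced by a copy of `N`, and each directed edge `(u,v)` induces the
undirected edges `{i_u, j_v}` for every cross-edge `(i,j) ∈ C`. -/
def nodeApply {V : Type*} {m : ℕ} (N : SimpleGraph (Fin m)) (C : Fin m → Fin m → Prop)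
    (R : V → V → Prop) : SimpleGraph (V × Fin m) where
  Adj x y := x ≠ y ∧ (nodeApplyBase N C R x y ∨ nodeApplyBase N C R y x)
  symm := ⟨fun x y h => ⟨h.1.symm, h.2.symm⟩⟩
  loopless := ⟨fun x h => h.1 rfl⟩

/-- The node gadget itself, as a graph on two copies of `Fin m`: two copies of the node
graph `N` plus the cross-edges `C` between the first and the second copy. -/
def gadgetGraph {m : ℕ} (N : SimpleGraph (Fin m)) (C : Fin m → Fin m → Prop) :
    SimpleGraph (Fin m ⊕ Fin m) where
  Adj x y :=
    (∃ i j, N.Adj i j ∧ ((x = Sum.inl i ∧ y = Sum.inl j) ∨ (x = Sum.inr i ∧ y = Sum.inr j))) ∨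
    (∃ i j, C i j ∧ ((x = Sum.inl i ∧ y = Sum.inr j) ∨ (x = Sum.inr j ∧ y = Sum.inl i)))
  symm := by
    refine ⟨?_⟩
    rintro x y (⟨i, j, h, ⟨rfl, rfl⟩ | ⟨rfl, rfl⟩⟩ | ⟨i, j, h, ⟨rfl, rfl⟩ | ⟨rfl, rfl⟩⟩)
    · exact Or.inl ⟨j, i, h.symm, Or.inl ⟨rfl, rfl⟩⟩
    · exact Or.inl ⟨j, i, h.symm, Or.inr ⟨rfl, rfl⟩⟩
    · exact Or.inr ⟨i, j, h, Or.inr ⟨rfl, rfl⟩⟩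
    · exact Or.inr ⟨i, j, h, Or.inl ⟨rfl, rfl⟩⟩
  loopless := by
    refine ⟨?_⟩
    rintro x (⟨i, j, h, ⟨h1, h2⟩ | ⟨h1, h2⟩⟩ | ⟨i, j, h, ⟨h1, h2⟩ | ⟨h1, h2⟩⟩) <;>
      subst h1 <;> simp_all

/-- The standard node gadget for reducing directed to undirected Hamiltonian cycle:
the node graph is the path `in — mid — out` (`pathGraph 3`) and the only cross-edge goes
from `out` (index 2) to `in` (index 0). -/
def stdHCGadget {V : Type*} (R : V → V → Prop) : SimpleGraph (V × Fin 3) :=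
  nodeApply (pathGraph 3) (fun i j => i = 2 ∧ j = 0) R

/-- The 9-vertex graph of Statement 9: vertex `(x, i)` stands for `(i+1)_x`; the
`2`-vertices (i = 1) are adjacent to everything else, the `1`-vertices (i = 0) are
additionally adjacent to each other, and the `3`-vertices (i = 2) have no further edges. -/
def graph9 : SimpleGraph (Fin 3 × Fin 3) where
  Adj a b := a ≠ b ∧ (a.2 = 1 ∨ b.2 = 1 ∨ (a.2 = 0 ∧ b.2 = 0))
  symm := ⟨fun a b h => ⟨h.1.symm, by tauto⟩⟩
  loopless := ⟨fun a h => h.1 rfl⟩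

/-!
All neighbours of the three `3`-vertices are among the three `2`-vertices. On a Hamiltonian
cycle each `3`-vertex is flanked by two `2`-vertices, so counting forces the successors and the
predecessors of the `3`-positions to be exactly the `2`-positions.
Hence the cycle alternates `3, 2, 3, 2, …` and never reaches a `1`-vertex.
-/

theorem ZMod.eq_univ_of_add_one_mem {n : ℕ} [NeZero n] {S : Set (ZMod n)} (hS : S.Nonempty)
    (hadd : ∀ x ∈ S, x + 1 ∈ S) : S = Set.univ := by
  obtain ⟨s, hs⟩ := hS
  have hiter : ∀ k : ℕ, s + k ∈ S := by
    intro k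
    induction k with
    | zero => simpa using hs
    | succ k ih => simpa [add_assoc] using hadd _ ih
  refine Set.eq_univ_of_forall fun t => ?_
  simpa [ZMod.natCast_zmod_val] using hiter (t - s).val

/-- Counting gives `Q = P + 1 = P - 1`, so `P + 2 = P` and `P ∪ Q` is closed under `· + 1`. -/
theorem ZMod.union_eq_univ_of_flanked {n : ℕ} [NeZero n] {P Q : Finset (ZMod n)}
    (hP : P.Nonempty) (hsucc : ∀ i ∈ P, i + 1 ∈ Q) (hpred : ∀ i ∈ P, i - 1 ∈ Q)
    (hcard : Q.card ≤ P.card) : P ∪ Q = Finset.univ := by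
  have hQsucc : Q = P.image (· + 1) :=
    (Finset.eq_of_subset_of_card_le (Finset.image_subset_iff.mpr hsucc) (by
      rwa [Finset.card_image_of_injective _ (add_left_injective 1)])).symm
  have hQpred : Q = P.image (· - 1) :=
    (Finset.eq_of_subset_of_card_le (Finset.image_subset_iff.mpr hpred) (by
      rwa [Finset.card_image_of_injective _ sub_left_injective])).symm
  have hP2 : ∀ i ∈ P, i + 2 ∈ P := by
    intro i hi
    obtain ⟨j, hj, hji⟩ := Finset.mem_image.mp (hQpred ▸ hsucc i hi)
    obtain rfl : j = i + 2 := by linear_combination hji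
    exact hj
  rw [← Finset.coe_inj, Finset.coe_univ]
  refine ZMod.eq_univ_of_add_one_mem
    (Finset.coe_nonempty.mpr (hP.mono Finset.subset_union_left)) fun x hx => ?_
  rcases Finset.mem_union.mp hx with hxP | hxQ
  · exact Finset.mem_union_right _ (hsucc x hxP)
  · obtain ⟨i, hi, rfl⟩ := Finset.mem_image.mp (hQsucc ▸ hxQ)
    simpa [add_assoc, one_add_one_eq_two] using Finset.mem_union_left Q (hP2 i hi)

theorem IsHamCycleFn.mem_or_mem_of_neighbors_subset {V : Type*} [Fintype V]
    {G : SimpleGraph V} {f : ZMod (Fintype.card V) ≃ V} (hf : IsHamCycleFn G f)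
    {A B : Finset V} (hA : A.Nonempty) (hAB : ∀ a ∈ A, ∀ v, G.Adj a v → v ∈ B)
    (hcard : B.card ≤ A.card) (v : V) : v ∈ A ∨ v ∈ B := by
  classical
  have : Nonempty V := ⟨hA.choose⟩
  have : NeZero (Fintype.card V) := ⟨Fintype.card_ne_zero⟩
  have hsucc : ∀ i ∈ A.image f.symm, i + 1 ∈ B.image f.symm := by
    intro i hi
    obtain ⟨a, ha, rfl⟩ := Finset.mem_image.mp hi
    have hadj : G.Adj a (f (f.symm a + 1)) := by simpa using hf (f.symm a)
    exact Finset.mem_image.mpr ⟨_, hAB a ha _ hadj, by simp⟩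
  have hpred : ∀ i ∈ A.image f.symm, i - 1 ∈ B.image f.symm := by
    intro i hi
    obtain ⟨a, ha, rfl⟩ := Finset.mem_image.mp hi
    have hadj : G.Adj a (f (f.symm a - 1)) := by simpa using (hf (f.symm a - 1)).symm
    exact Finset.mem_image.mpr ⟨_, hAB a ha _ hadj, by simp⟩
  have hunion := ZMod.union_eq_univ_of_flanked (hA.image _) hsucc hpred
    (by simpa [Finset.card_image_of_injective _ f.symm.injective] using hcard)
  have hv : f.symm v ∈ A.image f.symm ∪ B.image f.symm := hunion ▸ Finset.mem_univ _
  simpa using hv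

theorem graph9_snd_eq_one_of_adj {a v : Fin 3 × Fin 3} (ha : a.2 = 2) (hav : graph9.Adj a v) :
    v.2 = 1 := by
  obtain ⟨-, h | h | ⟨h, -⟩⟩ := hav <;> simp_all

theorem stmt_9 : ¬ Hamiltonian graph9 := by
  rintro ⟨f, hf⟩
  have hthree : ∀ a ∈ ({v | v.2 = 2} : Finset (Fin 3 × Fin 3)), ∀ v, graph9.Adj a v →
      v ∈ ({v | v.2 = 1} : Finset (Fin 3 × Fin 3)) := by
    intro a ha v hav
    simpa using graph9_snd_eq_one_of_adj (by simpa using ha) hav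
  have hone := hf.mem_or_mem_of_neighbors_subset ⟨(0, 2), by simp⟩ hthree (by decide) (0, 0)
  simp at hone
end
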